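/- Every leverage score of the smoothed matrix X* is at most 1/γ; that is, ℓ_j(X*) ≤ 1/γ for all j ∈ [n]. -/

import Mathlib

open Matrix

/-- `B` is the Moore–Penrose pseudoinverse of `M`. -/
def IsMoorePenrose {n : Type*} [Fintype n] (M B : Matrix n n ℝ) : Prop :=
  M * B * M = M ∧ B * M * B = B ∧ (M * B)ᵀ = M * B ∧ (B * M)ᵀ = B * M

/-! In the right singular basis the Gram matrix `Xsᵀ Xs` is diagonal, with entry `k` the squared
norm of column `k` of `S'`; so its pseudoinverse inverts the nonzero entries and
`ℓⱼ(Xs) = ∑ₖ (Xs V)ⱼₖ² / ‖S'ₖ‖²`. A column of `S'` is either zero or equal to the column of `S`,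
whose only entry is then at least `√γ`; hence each term is at most `(X V)ⱼₖ² / γ`, and these sum to
`‖X j‖² / γ ≤ 1 / γ`. -/

namespace IsMoorePenrose

variable {ι κ : Type*} [Fintype ι] [Fintype κ]

theorem unique {M B P : Matrix ι ι ℝ} (hB : IsMoorePenrose M B) (hP : IsMoorePenrose M P) :
    B = P := by
  obtain ⟨hB1, hB2, hB3, hB4⟩ := hB
  obtain ⟨hP1, hP2, hP3, hP4⟩ := hP
  have hMB : M * B = M * P := by
    calc M * B = (M * P * M * B)ᵀ := by rw [hP1, hB3]
      _ = (M * B)ᵀ * (M * P)ᵀ := by rw [Matrix.mul_assoc (M * P), transpose_mul]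
      _ = M * P := by rw [hB3, hP3, ← Matrix.mul_assoc, hB1]
  have hBM : B * M = P * M := by
    calc B * M = (B * (M * P * M))ᵀ := by rw [hP1, hB4]
      _ = (P * M)ᵀ * (B * M)ᵀ := by
        rw [← Matrix.mul_assoc, ← Matrix.mul_assoc, Matrix.mul_assoc (B * M), transpose_mul]
      _ = P * M := by rw [hB4, hP4, Matrix.mul_assoc, ← Matrix.mul_assoc M, hB1]
  calc B = B * M * B := hB2.symm
    _ = P * M * P := by rw [hBM, Matrix.mul_assoc, hMB, ← Matrix.mul_assoc]
    _ = P := hP2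

theorem conj [DecidableEq ι] {M B : Matrix ι ι ℝ} (h : IsMoorePenrose M B)
    {V : Matrix κ ι ℝ} (hV : Vᵀ * V = 1) : IsMoorePenrose (V * M * Vᵀ) (V * B * Vᵀ) := by
  have hmul : ∀ G H : Matrix ι ι ℝ, V * G * Vᵀ * (V * H * Vᵀ) = V * (G * H) * Vᵀ :=
    fun G H => by
      simp only [Matrix.mul_assoc, ← Matrix.mul_assoc Vᵀ V, hV, Matrix.one_mul]
  have htr : ∀ G : Matrix ι ι ℝ, (V * G * Vᵀ)ᵀ = V * Gᵀ * Vᵀ := fun G => by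
    simp only [transpose_mul, transpose_transpose, Matrix.mul_assoc]
  obtain ⟨h1, h2, h3, h4⟩ := h
  exact ⟨by rw [hmul, hmul, h1], by rw [hmul, hmul, h2], by rw [hmul, htr, h3],
    by rw [hmul, htr, h4]⟩

end IsMoorePenrose

-- `v⁻¹` is taken pointwise, and `0⁻¹ = 0` makes it the pseudoinverse at the zero entries too.
theorem isMoorePenrose_diagonal_inv {ι : Type*} [Fintype ι] [DecidableEq ι] (v : ι → ℝ) :
    IsMoorePenrose (diagonal v) (diagonal v⁻¹) := by
  refine ⟨?_, ?_, ?_, ?_⟩ <;>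
    simp only [diagonal_mul_diagonal, diagonal_transpose, diagonal_eq_diagonal_iff]
  · exact fun k => mul_inv_mul_cancel (v k)
  · exact fun k => by simpa using mul_inv_mul_cancel (v k)⁻¹

theorem transpose_mul_self_eq_diagonal {ι κ : Type*} [Fintype κ] [DecidableEq ι]
    {S : Matrix κ ι ℝ} (hS : ∀ i k l, k ≠ l → S i k * S i l = 0) :
    Sᵀ * S = diagonal fun k => Sᵀ k ⬝ᵥ Sᵀ k := by
  ext k l
  rcases eq_or_ne k l with rfl | hkl
  · rw [diagonal_apply_eq]
    rfl
  · rw [diagonal_apply_ne _ hkl]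
    exact Finset.sum_eq_zero fun i _ => hS i k l hkl

section

variable {ι κ : Type*} [Fintype ι] [Fintype κ]

theorem transpose_mul_self_of_isometry [DecidableEq κ] {U : Matrix κ κ ℝ} (hU : Uᵀ * U = 1)
    (A : Matrix κ ι ℝ) (V : Matrix ι ι ℝ) :
    (U * A * Vᵀ)ᵀ * (U * A * Vᵀ) = V * (Aᵀ * A) * Vᵀ := by
  simp only [transpose_mul, transpose_transpose, Matrix.mul_assoc, ← Matrix.mul_assoc Uᵀ U, hU,
    Matrix.one_mul]

theorem dotProduct_mulVec_conj_diagonal [DecidableEq ι] (x : κ → ℝ) (V : Matrix κ ι ℝ)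
    (e : ι → ℝ) : x ⬝ᵥ (V * diagonal e * Vᵀ) *ᵥ x = ∑ k, e k * (x ᵥ* V) k ^ 2 := by
  rw [← mulVec_mulVec, ← mulVec_mulVec, mulVec_transpose, dotProduct_mulVec, dotProduct]
  simp only [mulVec_diagonal]
  exact Finset.sum_congr rfl fun k _ => by ring

theorem vecMul_dotProduct_vecMul_self [DecidableEq κ] {V : Matrix κ ι ℝ} (hV : V * Vᵀ = 1)
    (x : κ → ℝ) : x ᵥ* V ⬝ᵥ x ᵥ* V = x ⬝ᵥ x := by
  rw [← dotProduct_mulVec, ← mulVec_transpose, mulVec_mulVec, hV, one_mulVec]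

end

noncomputable def threshold {ι : Type*} (t : ℝ) (c : ι → ℝ) : ι → ℝ :=
  fun i => if t ≤ c i then c i else 0

theorem threshold_eq_self_or_eq_zero {ι : Type*} {t : ℝ} (ht : 0 < t) {c : ι → ℝ}
    (hc : ∀ i i', i ≠ i' → c i * c i' = 0) : threshold t c = c ∨ threshold t c = 0 := by
  by_cases h : ∃ i, t ≤ c i
  · obtain ⟨i₀, hi₀⟩ := h
    left
    funext i
    by_cases hi : i = i₀
    · simp only [threshold, hi, if_pos hi₀]
    · have hci₀ : c i₀ ≠ 0 := by linarith
      simp only [threshold, (mul_eq_zero.mp (hc i i₀ hi)).resolve_right hci₀, ite_self]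
  · push Not at h
    right
    funext i
    simp only [threshold, if_neg (not_le.mpr (h i)), Pi.zero_apply]

theorem inv_dotProduct_self_mul_le_div {ι : Type*} [Fintype ι] {γ a : ℝ} (hγ : 0 < γ)
    (ha : 0 ≤ a) {w : ι → ℝ} (hw : ∀ i, w i ≠ 0 → γ ≤ w i ^ 2) : (w ⬝ᵥ w)⁻¹ * a ≤ a / γ := by
  by_cases h : ∃ i, w i ≠ 0
  · obtain ⟨i, hi⟩ := h
    have hγw : γ ≤ w ⬝ᵥ w :=
      (hw i hi).trans ((sq (w i)).trans_le (Finset.single_le_sum (f := fun i => w i * w i)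
        (fun i _ => mul_self_nonneg (w i)) (Finset.mem_univ i)))
    rw [div_eq_inv_mul]
    exact mul_le_mul_of_nonneg_right (inv_anti₀ hγ hγw) ha
  · push Not at h
    rw [show w = 0 from funext h, dotProduct_zero, _root_.inv_zero, zero_mul]
    positivity

theorem inv_dotProduct_threshold_mul_sq_le {ι : Type*} [Fintype ι] {γ : ℝ} (hγ : 0 < γ)
    {c : ι → ℝ} (hc : ∀ i i', i ≠ i' → c i * c i' = 0) (u : ι → ℝ) :
    (threshold √γ c ⬝ᵥ threshold √γ c)⁻¹ * (u ⬝ᵥ threshold √γ c) ^ 2 ≤ (u ⬝ᵥ c) ^ 2 / γ := by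
  have hlarge : ∀ i, threshold √γ c i ≠ 0 → γ ≤ threshold √γ c i ^ 2 := fun i hi => by
    unfold threshold at hi ⊢
    split_ifs at hi ⊢ with hci
    · simpa [Real.sq_sqrt hγ.le] using pow_le_pow_left₀ (Real.sqrt_nonneg γ) hci 2
    · exact absurd rfl hi
  refine (inv_dotProduct_self_mul_le_div hγ (sq_nonneg _) hlarge).trans ?_
  refine div_le_div_of_nonneg_right ?_ hγ.le
  rcases threshold_eq_self_or_eq_zero (Real.sqrt_pos.mpr hγ) hc with h | h
  · rw [h]
  · simpa [h] using sq_nonneg (u ⬝ᵥ c)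

section RectangularDiagonal

variable {R : Type*} [MulZeroClass R] {n d : ℕ} {S : Matrix (Fin n) (Fin d) R}

theorem mul_eq_zero_of_ne_col (hS : ∀ (i : Fin n) (k : Fin d), (i : ℕ) ≠ k → S i k = 0)
    (i : Fin n) {k l : Fin d} (hkl : k ≠ l) : S i k * S i l = 0 := by
  rcases ne_or_eq (i : ℕ) k with h | h
  · rw [hS i k h, zero_mul]
  · rw [hS i l fun h' => hkl (Fin.ext (h.symm.trans h')), mul_zero]

theorem mul_eq_zero_of_ne_row (hS : ∀ (i : Fin n) (k : Fin d), (i : ℕ) ≠ k → S i k = 0)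
    {i i' : Fin n} (hii' : i ≠ i') (k : Fin d) : S i k * S i' k = 0 := by
  rcases ne_or_eq (i : ℕ) k with h | h
  · rw [hS i k h, zero_mul]
  · rw [hS i' k fun h' => hii' (Fin.ext (h.trans h'.symm)), mul_zero]

end RectangularDiagonal

/-- Let `X` have rows of Euclidean norm at most 1, with SVD `X = U S Vᵀ`, and let
`Xs = U S' Vᵀ` be obtained by zeroing out all singular values below `√γ` (`γ > 0`).
Then every leverage score of `Xs`, namely `ℓⱼ(Xs) = Xs[j,:]ᵀ (Xsᵀ Xs)⁺ Xs[j,:]`,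
is at most `1/γ`. -/
theorem leverage_scores_of_smoothed_le {n d : ℕ} (γ : ℝ) (hγ : 0 < γ)
    (X Xs : Matrix (Fin n) (Fin d) ℝ)
    (hrows : ∀ j, ∑ k, (X j k) ^ 2 ≤ 1)
    (U : Matrix (Fin n) (Fin n) ℝ) (hU : U ∈ Matrix.orthogonalGroup (Fin n) ℝ)
    (V : Matrix (Fin d) (Fin d) ℝ) (hV : V ∈ Matrix.orthogonalGroup (Fin d) ℝ)
    (S S' : Matrix (Fin n) (Fin d) ℝ)
    (hSdiag : ∀ (i : Fin n) (j : Fin d), (i : ℕ) ≠ (j : ℕ) → S i j = 0)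
    (hS' : ∀ i j, S' i j = if Real.sqrt γ ≤ S i j then S i j else 0)
    (hX : X = U * S * Vᵀ) (hXs : Xs = U * S' * Vᵀ)
    (B : Matrix (Fin d) (Fin d) ℝ) (hB : IsMoorePenrose (Xsᵀ * Xs) B)
    (j : Fin n) :
    Xs j ⬝ᵥ B.mulVec (Xs j) ≤ 1 / γ := by
  have hUU : Uᵀ * U = 1 := by simpa using (mem_orthogonalGroup_iff' _ _).mp hU
  have hVV : Vᵀ * V = 1 := by simpa using (mem_orthogonalGroup_iff' _ _).mp hV
  have hVV' : V * Vᵀ = 1 := by simpa using (mem_orthogonalGroup_iff _ _).mp hV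
  have hcol : ∀ k, S'ᵀ k = threshold √γ (Sᵀ k) := fun k => funext fun i => hS' i k
  have hS'diag : ∀ (i : Fin n) (k : Fin d), (i : ℕ) ≠ k → S' i k = 0 := fun i k h => by
    rw [hS', hSdiag i k h, ite_self]
  set D : Fin d → ℝ := fun k => S'ᵀ k ⬝ᵥ S'ᵀ k
  have hgram : Xsᵀ * Xs = V * diagonal D * Vᵀ := by
    rw [hXs, transpose_mul_self_of_isometry hUU,
      transpose_mul_self_eq_diagonal fun i _ _ => mul_eq_zero_of_ne_col hS'diag i]
  have hBD : B = V * diagonal D⁻¹ * Vᵀ :=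
    hB.unique (hgram ▸ (isMoorePenrose_diagonal_inv D).conj hVV)
  have hXsV : Xs * V = U * S' := by rw [hXs, Matrix.mul_assoc, hVV, Matrix.mul_one]
  have hXV : X * V = U * S := by rw [hX, Matrix.mul_assoc, hVV, Matrix.mul_one]
  have hterm : ∀ k, D⁻¹ k * (Xs j ᵥ* V) k ^ 2 ≤ (X j ᵥ* V) k ^ 2 / γ := fun k => by
    rw [← mul_apply_eq_vecMul, ← mul_apply_eq_vecMul, hXsV, hXV]
    change (S'ᵀ k ⬝ᵥ S'ᵀ k)⁻¹ * (U j ⬝ᵥ S'ᵀ k) ^ 2 ≤ (U j ⬝ᵥ Sᵀ k) ^ 2 / γ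
    rw [hcol]
    exact inv_dotProduct_threshold_mul_sq_le hγ (fun _ _ h => mul_eq_zero_of_ne_row hSdiag h k) _
  rw [hBD, dotProduct_mulVec_conj_diagonal]
  calc ∑ k, D⁻¹ k * (Xs j ᵥ* V) k ^ 2 ≤ ∑ k, (X j ᵥ* V) k ^ 2 / γ :=
        Finset.sum_le_sum fun k _ => hterm k
    _ = (X j ⬝ᵥ X j) / γ := by
      rw [← Finset.sum_div, ← vecMul_dotProduct_vecMul_self hVV' (X j), dotProduct]
      simp only [sq]
    _ ≤ 1 / γ := by
      refine div_le_div_of_nonneg_right ?_ hγ.le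
      simpa only [dotProduct, sq] using hrows j
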